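/- For every adt t over Prop there exists an FO sentence φ_t such that for every trace τ, τ satisfies φ_t if and only if τ ∈ ⟦t⟧; moreover φ_t can be chosen of size at most exponential in |t| (there is a constant c, independent of t, with |φ_t| ≤ 2^{c·|t|}). -/

import Mathlib

namespace ADTpaper

/-- Propositional formulas over a set `P` of propositional variables. -/
inductive PropForm (P : Type) : Type where
  | var : P → PropForm P
  | tru : PropForm P
  | fls : PropForm P
  | neg : PropForm P → PropForm P
  | conj : PropForm P → PropForm P → PropForm P
  | disj : PropForm P → PropForm P → PropForm P

/-- A valuation is a subset of `P` (an element of the alphabet `Σ = 2^P`). -/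
abbrev Val (P : Type) : Type := Set P

/-- A trace is a finite word over the alphabet `Σ = 2^P`. -/
abbrev Trace (P : Type) : Type := List (Val P)

/-- Satisfaction of a propositional formula by a valuation. -/
def PropForm.eval {P : Type} (v : Val P) : PropForm P → Prop
  | .var p => p ∈ v
  | .tru => True
  | .fls => False
  | .neg φ => ¬ PropForm.eval v φ
  | .conj φ ψ => PropForm.eval v φ ∧ PropForm.eval v ψ
  | .disj φ ψ => PropForm.eval v φ ∨ PropForm.eval v ψ

/-- Size of a propositional formula. -/
def PropForm.size {P : Type} : PropForm P → ℕ
  | .var _ => 1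
  | .tru => 1
  | .fls => 1
  | .neg φ => PropForm.size φ + 1
  | .conj φ ψ => PropForm.size φ + PropForm.size ψ + 1
  | .disj φ ψ => PropForm.size φ + PropForm.size ψ + 1

/-- Attack-defense trees over `P` (operators taken binary, w.l.o.g. by associativity). -/
inductive ADT (P : Type) : Type where
  | eps  : ADT P
  | leaf : PropForm P → ADT P
  | orA  : ADT P → ADT P → ADT P
  | sand : ADT P → ADT P → ADT P
  | andA : ADT P → ADT P → ADT P
  | cm   : ADT P → ADT P → ADT P

/-- Trace semantics of an adt: a language over the alphabet `Σ = 2^P`. -/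
def sem {P : Type} : ADT P → Language (Val P)
  | .eps => 1
  | .leaf γ => {w | ∃ w' v, w = w' ++ [v] ∧ PropForm.eval v γ}
  | .orA t₁ t₂ => sem t₁ ⊔ sem t₂
  | .sand t₁ t₂ => sem t₁ * sem t₂
  | .andA t₁ t₂ => (sem t₁ * ⊤ ⊓ sem t₂) ⊔ (sem t₂ * ⊤ ⊓ sem t₁)
  | .cm t₁ t₂ => sem t₁ \ sem t₂

/-- Countermeasure-depth of an adt. -/
def cd {P : Type} : ADT P → ℕ
  | .eps => 0
  | .leaf _ => 0
  | .orA t₁ t₂ => max (cd t₁) (cd t₂)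
  | .sand t₁ t₂ => max (cd t₁) (cd t₂)
  | .andA t₁ t₂ => max (cd t₁) (cd t₂)
  | .cm t₁ t₂ => max (cd t₁) (cd t₂ + 1)

/-- The size of an adt: the sum of the sizes of its leaves, the leaf `ε` having size 1. -/
def ADT.size {P : Type} : ADT P → ℕ
  | .eps => 1
  | .leaf γ => PropForm.size γ
  | .orA t₁ t₂ => ADT.size t₁ + ADT.size t₂
  | .sand t₁ t₂ => ADT.size t₁ + ADT.size t₂
  | .andA t₁ t₂ => ADT.size t₁ + ADT.size t₂
  | .cm t₁ t₂ => ADT.size t₁ + ADT.size t₂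


/-- First-order logic on finite words over alphabet `α`: for each letter `a` a unary
predicate `a(x)` ("the letter at position `x` is `a`") and the binary predicate `x < y`
on positions. Variables are indexed by natural numbers. -/
inductive FO (α : Type) : Type where
  | letter : α → ℕ → FO α
  | lt : ℕ → ℕ → FO α
  | neg : FO α → FO α
  | conj : FO α → FO α → FO α
  | disj : FO α → FO α → FO α
  | ex : ℕ → FO α → FO α
  | all : ℕ → FO α → FO α

/-- Satisfaction of an FO formula in a finite word `w`, with assignment `ρ` of the
variables to positions (positions of `w` are `0, …, w.length - 1`). -/
def FO.sat {α : Type} (w : List α) (ρ : ℕ → ℕ) : FO α → Prop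
  | .letter a x => w[ρ x]? = some a
  | .lt x y => ρ x < ρ y
  | .neg φ => ¬ FO.sat w ρ φ
  | .conj φ ψ => FO.sat w ρ φ ∧ FO.sat w ρ ψ
  | .disj φ ψ => FO.sat w ρ φ ∨ FO.sat w ρ ψ
  | .ex x φ => ∃ i, i < w.length ∧ FO.sat w (Function.update ρ x i) φ
  | .all x φ => ∀ i, i < w.length → FO.sat w (Function.update ρ x i) φ

/-- Size of an FO formula (its length as an expression). -/
def FO.size {α : Type} : FO α → ℕ
  | .letter _ _ => 1
  | .lt _ _ => 1
  | .neg φ => FO.size φ + 1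
  | .conj φ ψ => FO.size φ + FO.size ψ + 1
  | .disj φ ψ => FO.size φ + FO.size ψ + 1
  | .ex _ φ => FO.size φ + 1
  | .all _ φ => FO.size φ + 1

/-- `φ` defines the language `L`: a word belongs to `L` iff it satisfies `φ`
(under every assignment; in particular `φ` behaves as a sentence). -/
def FODefines {α : Type} (φ : FO α) (L : Language α) : Prop :=
  ∀ (w : List α) (ρ : ℕ → ℕ), w ∈ L ↔ FO.sat w ρ φ

/-- Quantifier-free FO formulas. -/
inductive QF {α : Type} : FO α → Prop where
  | letter (a : α) (x : ℕ) : QF (FO.letter a x)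
  | lt (x y : ℕ) : QF (FO.lt x y)
  | neg {φ} : QF φ → QF (FO.neg φ)
  | conj {φ ψ} : QF φ → QF ψ → QF (FO.conj φ ψ)
  | disj {φ ψ} : QF φ → QF ψ → QF (FO.disj φ ψ)

mutual
  /-- `SigmaFO ℓ φ`: `φ` has at most `ℓ` alternating blocks of quantifiers,
  starting with a block of `∃`. -/
  inductive SigmaFO {α : Type} : ℕ → FO α → Prop where
    | qf {n : ℕ} {φ : FO α} : QF φ → SigmaFO n φ
    | ofPi {n : ℕ} {φ : FO α} : PiFO n φ → SigmaFO (n + 1) φ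
    | ex {n x : ℕ} {φ : FO α} : SigmaFO (n + 1) φ → SigmaFO (n + 1) (FO.ex x φ)

  /-- `PiFO ℓ φ`: `φ` has at most `ℓ` alternating blocks of quantifiers,
  starting with a block of `∀`. -/
  inductive PiFO {α : Type} : ℕ → FO α → Prop where
    | qf {n : ℕ} {φ : FO α} : QF φ → PiFO n φ
    | ofSigma {n : ℕ} {φ : FO α} : SigmaFO n φ → PiFO (n + 1) φ
    | all {n x : ℕ} {φ : FO α} : PiFO (n + 1) φ → PiFO (n + 1) (FO.all x φ)
end

/-- A language is `Σ_ℓ`-definable if it is defined by some `Σ_ℓ` sentence. -/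
def SigmaDefinable {α : Type} (ℓ : ℕ) (L : Language α) : Prop :=
  ∃ φ : FO α, SigmaFO ℓ φ ∧ FODefines φ L

/-- A language is `Π_ℓ`-definable if it is defined by some `Π_ℓ` sentence. -/
def PiDefinable {α : Type} (ℓ : ℕ) (L : Language α) : Prop :=
  ∃ φ : FO α, PiFO ℓ φ ∧ FODefines φ L

end ADTpaper

/-!
An adt is translated bottom-up into a family of formulas `φ x y` expressing that the factor
of the word between the positions held by `x` and `y` lies in the language of the tree.
Union, intersection and difference become Boolean connectives, a concatenation guesses its
split point with two quantified variables, and the prefix closure `L · Σ*` occurring in the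
semantics of AND guesses the end of the prefix with one. The empty word, which no pair of
positions describes, is handled by recording separately whether it belongs to each
sublanguage. Every binary node uses each child's formula at most twice, so the size of the
translation at most doubles (up to a constant) per node and is exponential in `|t|`.
-/

section Factors

variable {α : Type}

theorem Language.mem_mul_iff_exists_take_drop {L M : Language α} {u : List α} :
    u ∈ L * M ↔ ∃ k, u.take k ∈ L ∧ u.drop k ∈ M := by
  rw [Language.mem_mul]
  constructor
  · rintro ⟨a, ha, b, hb, rfl⟩
    exact ⟨a.length, by simpa using ha, by simpa using hb⟩
  · rintro ⟨k, hL, hM⟩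
    exact ⟨_, hL, _, hM, List.take_append_drop k u⟩

theorem Language.mem_mul_top_iff_exists_take {L : Language α} {u : List α} :
    u ∈ L * ⊤ ↔ ∃ k, u.take k ∈ L := by
  rw [Language.mem_mul_iff_exists_take_drop]
  exact exists_congr fun _ => and_iff_left trivial

theorem List.extract_take_eq (w : List α) (i n k : ℕ) :
    (w.extract i n).take k = w.extract i (min (i + k) n) := by
  simp only [List.extract_eq_take_drop, List.take_take]
  congr 1
  omega

theorem List.extract_drop_eq (w : List α) (i n k : ℕ) :
    (w.extract i n).drop k = w.extract (i + k) n := by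
  simp only [List.extract_eq_take_drop, List.drop_take, List.drop_drop]
  congr 1
  omega

theorem List.extract_eq_nil_of_le (w : List α) {i n : ℕ} (h : n ≤ i) : w.extract i n = [] := by
  simp [Nat.sub_eq_zero_of_le h]

theorem List.extract_add_one (w : List α) {i j : ℕ} (hij : i ≤ j) (hj : j < w.length) :
    w.extract i (j + 1) = w.extract i j ++ [w[j]] := by
  rw [List.extract_eq_take_drop, List.extract_eq_take_drop, show j + 1 - i = j - i + 1 by omega,
    List.take_add_one, List.getElem?_drop, show i + (j - i) = j by omega,
    List.getElem?_eq_getElem hj]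
  rfl

theorem Language.extract_mem_mul_iff {w : List α} {L M : Language α} {i j : ℕ} (hij : i ≤ j) :
    w.extract i (j + 1) ∈ L * M ↔
      ([] ∈ L ∧ w.extract i (j + 1) ∈ M) ∨ ([] ∈ M ∧ w.extract i (j + 1) ∈ L) ∨
        ∃ m, i ≤ m ∧ m < j ∧ w.extract i (m + 1) ∈ L ∧ w.extract (m + 1) (j + 1) ∈ M := by
  simp only [Language.mem_mul_iff_exists_take_drop, List.extract_take_eq, List.extract_drop_eq]
  constructor
  · rintro ⟨k, hL, hM⟩
    rcases Nat.eq_zero_or_pos k with rfl | hk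
    · left
      simpa using And.intro hL hM
    by_cases hkj : j + 1 ≤ i + k
    · right; left
      rw [min_eq_right hkj] at hL
      rw [List.extract_eq_nil_of_le w hkj] at hM
      exact ⟨hM, hL⟩
    · right; right
      refine ⟨i + k - 1, by omega, by omega, ?_, ?_⟩
      · rwa [min_eq_left (by omega), show i + k = i + k - 1 + 1 by omega] at hL
      · rwa [show i + k = i + k - 1 + 1 by omega] at hM
  · rintro (⟨hL, hM⟩ | ⟨hM, hL⟩ | ⟨m, him, hmj, hL, hM⟩)
    · exact ⟨0, by simpa using hL, by simpa using hM⟩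
    · refine ⟨j + 1 - i, ?_, ?_⟩
      · rwa [min_eq_right (by omega)]
      · rwa [List.extract_eq_nil_of_le w (by omega)]
    · refine ⟨m + 1 - i, ?_, ?_⟩
      · rwa [min_eq_left (by omega), show i + (m + 1 - i) = m + 1 by omega]
      · rwa [show i + (m + 1 - i) = m + 1 by omega]

theorem Language.extract_mem_mul_top_iff {w : List α} {L : Language α} {i j : ℕ} (hij : i ≤ j) :
    w.extract i (j + 1) ∈ L * ⊤ ↔ [] ∈ L ∨ ∃ m, i ≤ m ∧ m ≤ j ∧ w.extract i (m + 1) ∈ L := by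
  simp only [Language.mem_mul_top_iff_exists_take, List.extract_take_eq]
  constructor
  · rintro ⟨k, hL⟩
    rcases Nat.eq_zero_or_pos k with rfl | hk
    · left
      simpa using hL
    · right
      refine ⟨min (i + k) (j + 1) - 1, by omega, by omega, ?_⟩
      rwa [show min (i + k) (j + 1) = min (i + k) (j + 1) - 1 + 1 by omega] at hL
  · rintro (hL | ⟨m, him, hmj, hL⟩)
    · exact ⟨0, by simpa using hL⟩
    · exact ⟨m + 1 - i, by rwa [min_eq_left (by omega), show i + (m + 1 - i) = m + 1 by omega]⟩

end Factors

namespace ADTpaper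

namespace FO

variable {α : Type}

def falsum : FO α := FO.lt 0 0

def le (x y : ℕ) : FO α := FO.neg (FO.lt y x)

def succ (u v z : ℕ) : FO α :=
  FO.conj (FO.lt u v) (FO.neg (FO.ex z (FO.conj (FO.lt u z) (FO.lt z v))))

def letterIn (l : List α) (y : ℕ) : FO α := (l.map (FO.letter · y)).foldr FO.disj falsum

variable {w : List α} {ρ : ℕ → ℕ}

@[simp] theorem sat_falsum : ¬ FO.sat w ρ (falsum : FO α) := by
  simp [falsum, FO.sat]

@[simp] theorem sat_le {x y : ℕ} : FO.sat w ρ (le x y : FO α) ↔ ρ x ≤ ρ y := by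
  simp [le, FO.sat]

@[simp] theorem sat_ite_falsum {e : Prop} [Decidable e] {φ : FO α} :
    FO.sat w ρ (if e then φ else falsum) ↔ e ∧ FO.sat w ρ φ := by
  split_ifs with he <;> simp [he]

theorem sat_succ {u v z : ℕ} (hu : u ≠ z) (hv : v ≠ z) (hlen : ρ v ≤ w.length) :
    FO.sat w ρ (succ u v z : FO α) ↔ ρ v = ρ u + 1 := by
  simp only [succ, FO.sat, Function.update_self, Function.update_of_ne hu,
    Function.update_of_ne hv]
  constructor
  · rintro ⟨huv, hno⟩
    by_contra hne
    exact hno ⟨ρ u + 1, by omega, by omega, by omega⟩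
  · rintro h
    refine ⟨by omega, ?_⟩
    rintro ⟨i, -, hui, hiv⟩
    omega

@[simp] theorem sat_letterIn {l : List α} {y : ℕ} :
    FO.sat w ρ (letterIn l y) ↔ ∃ a ∈ l, w[ρ y]? = some a := by
  induction l with
  | nil => simp [letterIn]
  | cons a l ih =>
    simp only [letterIn, List.map_cons, List.foldr_cons] at ih ⊢
    simp [FO.sat, ih]

theorem size_pos (φ : FO α) : 1 ≤ φ.size := by
  cases φ <;> simp [FO.size]

theorem size_ite_falsum_le (e : Prop) [Decidable e] (φ : FO α) :
    (if e then φ else falsum).size ≤ φ.size := by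
  split_ifs
  · rfl
  · exact size_pos φ

@[simp] theorem size_falsum : (falsum : FO α).size = 1 := rfl

@[simp] theorem size_le (x y : ℕ) : (le x y : FO α).size = 2 := rfl

@[simp] theorem size_succ (u v z : ℕ) : (succ u v z : FO α).size = 7 := rfl

@[simp] theorem size_letterIn (l : List α) (y : ℕ) : (letterIn l y).size = 2 * l.length + 1 := by
  induction l with
  | nil => rfl
  | cons a l ih =>
    simp only [letterIn, List.map_cons, List.foldr_cons] at ih ⊢
    simp only [FO.size, ih, List.length_cons]
    ring

end FO

section FactorFormulas

variable {α : Type}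

/-- `φ x y` holds iff `ρ x ≤ ρ y` and the factor of `w` from position `ρ x` to position `ρ y`,
both included, lies in `L`. Empty factors cannot be addressed by positions; whether `[] ∈ L`
is therefore passed to the combinators below as a separate flag. -/
def DefinesFactors (φ : ℕ → ℕ → FO α) (L : Language α) : Prop :=
  ∀ (x y : ℕ) (w : List α) (ρ : ℕ → ℕ), ρ y < w.length →
    (FO.sat w ρ (φ x y) ↔ ρ x ≤ ρ y ∧ w.extract (ρ x) (ρ y + 1) ∈ L)

/-- The bound variables `max x y + 1`, `max x y + 2`, `max x y + 3` only need to differ from `x`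
and `y`: subformulas are used through `DefinesFactors`, which holds under every assignment. -/
def concatFormula (e₁ e₂ : Prop) [Decidable e₁] [Decidable e₂] (φ₁ φ₂ : ℕ → ℕ → FO α)
    (x y : ℕ) : FO α :=
  FO.disj (FO.disj (if e₁ then φ₂ x y else FO.falsum) (if e₂ then φ₁ x y else FO.falsum))
    (FO.ex (max x y + 1) (FO.ex (max x y + 2)
      (FO.conj (FO.succ (max x y + 1) (max x y + 2) (max x y + 3))
        (FO.conj (φ₁ x (max x y + 1)) (φ₂ (max x y + 2) y)))))

def prefixFormula (e : Prop) [Decidable e] (φ : ℕ → ℕ → FO α) (x y : ℕ) : FO α :=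
  FO.disj (if e then FO.le x y else FO.falsum)
    (FO.ex (max x y + 1) (FO.conj (FO.le (max x y + 1) y) (φ x (max x y + 1))))

def sentenceOfFactors (e : Prop) [Decidable e] (φ : ℕ → ℕ → FO α) : FO α :=
  FO.disj (if e then FO.all 0 FO.falsum else FO.falsum)
    (FO.ex 0 (FO.ex 1 (FO.conj (FO.all 2 (FO.conj (FO.le 0 2) (FO.le 2 1))) (φ 0 1))))

variable {φ φ₁ φ₂ : ℕ → ℕ → FO α} {L L₁ L₂ : Language α}

theorem DefinesFactors.one : DefinesFactors (fun _ _ => FO.falsum) (1 : Language α) := by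
  intro x y w ρ hy
  simp only [FO.sat_falsum, false_iff, not_and, Language.mem_one]
  intro hxy
  simp only [List.extract_eq_take_drop, List.take_eq_nil_iff, List.drop_eq_nil_iff]
  omega

theorem DefinesFactors.lastLetter [Fintype α] (p : α → Prop) [DecidablePred p] :
    DefinesFactors (fun x y => FO.conj (FO.le x y) (FO.letterIn (Finset.univ.filter p).toList y))
      {u | ∃ u' a, u = u' ++ [a] ∧ p a} := by
  intro x y w ρ hy
  simp only [FO.sat, FO.sat_le, FO.sat_letterIn, Finset.mem_toList, Finset.mem_filter,
    Finset.mem_univ, true_and, List.getElem?_eq_getElem hy, Option.some_inj, exists_eq_right']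
  refine and_congr_right fun hxy => ?_
  rw [w.extract_add_one hxy hy]
  constructor
  · exact fun h => ⟨_, _, rfl, h⟩
  · rintro ⟨u', a, h, ha⟩
    rwa [List.singleton_inj.1 (List.append_inj' h rfl).2]

theorem DefinesFactors.sup (h₁ : DefinesFactors φ₁ L₁) (h₂ : DefinesFactors φ₂ L₂) :
    DefinesFactors (fun x y => FO.disj (φ₁ x y) (φ₂ x y)) (L₁ ⊔ L₂) := by
  intro x y w ρ hy
  simp only [FO.sat, h₁ x y w ρ hy, h₂ x y w ρ hy, ← and_or_left]
  rfl

theorem DefinesFactors.inf (h₁ : DefinesFactors φ₁ L₁) (h₂ : DefinesFactors φ₂ L₂) :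
    DefinesFactors (fun x y => FO.conj (φ₁ x y) (φ₂ x y)) (L₁ ⊓ L₂) := by
  intro x y w ρ hy
  simp only [FO.sat, h₁ x y w ρ hy, h₂ x y w ρ hy, ← and_and_left]
  rfl

theorem DefinesFactors.sdiff (h₁ : DefinesFactors φ₁ L₁) (h₂ : DefinesFactors φ₂ L₂) :
    DefinesFactors (fun x y => FO.conj (φ₁ x y) (FO.neg (φ₂ x y))) (L₁ \ L₂) := by
  intro x y w ρ hy
  simp only [FO.sat, h₁ x y w ρ hy, h₂ x y w ρ hy]
  change _ ↔ _ ∧ _ ∈ L₁ ∧ _ ∉ L₂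
  tauto

theorem DefinesFactors.mul (h₁ : DefinesFactors φ₁ L₁) (h₂ : DefinesFactors φ₂ L₂)
    [Decidable ([] ∈ L₁)] [Decidable ([] ∈ L₂)] :
    DefinesFactors (concatFormula ([] ∈ L₁) ([] ∈ L₂) φ₁ φ₂) (L₁ * L₂) := by
  intro x y w ρ hy
  set m := max x y + 1
  have hsplit : ∀ i k, i < w.length → k < w.length →
      (FO.sat w (Function.update (Function.update ρ m i) (m + 1) k)
        (FO.conj (FO.succ m (m + 1) (m + 2)) (FO.conj (φ₁ x m) (φ₂ (m + 1) y))) ↔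
        k = i + 1 ∧ (ρ x ≤ i ∧ w.extract (ρ x) (i + 1) ∈ L₁) ∧
          (k ≤ ρ y ∧ w.extract k (ρ y + 1) ∈ L₂)) := by
    intro i k hi hk
    have hxm : x ≠ m := by omega
    have hym : y ≠ m := by omega
    simp only [FO.sat]
    rw [FO.sat_succ (by omega) (by omega) (by rw [Function.update_self]; omega),
      h₁ x m w _ (by simpa using hi),
      h₂ (m + 1) y w _ (by simp [hym, hy, show y ≠ m + 1 by omega])]
    simp [hxm, hym, show x ≠ m + 1 by omega, show y ≠ m + 1 by omega]
  simp only [concatFormula, FO.sat, FO.sat_ite_falsum, h₁ x y w ρ hy, h₂ x y w ρ hy]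
  constructor
  · rintro ((⟨he, hxy, hM⟩ | ⟨he, hxy, hL⟩) | ⟨i, hi, k, hk, hs⟩)
    · exact ⟨hxy, (Language.extract_mem_mul_iff hxy).2 (Or.inl ⟨he, hM⟩)⟩
    · exact ⟨hxy, (Language.extract_mem_mul_iff hxy).2 (Or.inr (Or.inl ⟨he, hL⟩))⟩
    · obtain ⟨rfl, ⟨hxi, hL⟩, hky, hM⟩ := (hsplit i k hi hk).1 hs
      exact ⟨by omega,
        (Language.extract_mem_mul_iff (by omega)).2 (Or.inr (Or.inr ⟨i, hxi, by omega, hL, hM⟩))⟩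
  · rintro ⟨hxy, hmem⟩
    rcases (Language.extract_mem_mul_iff hxy).1 hmem with
      ⟨he, hM⟩ | ⟨he, hL⟩ | ⟨i, hxi, hiy, hL, hM⟩
    · exact Or.inl (Or.inl ⟨he, hxy, hM⟩)
    · exact Or.inl (Or.inr ⟨he, hxy, hL⟩)
    · exact Or.inr ⟨i, by omega, i + 1, by omega,
        (hsplit i (i + 1) (by omega) (by omega)).2 ⟨rfl, ⟨hxi, hL⟩, by omega, hM⟩⟩

theorem DefinesFactors.mul_top (h : DefinesFactors φ L) [Decidable ([] ∈ L)] :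
    DefinesFactors (prefixFormula ([] ∈ L) φ) (L * ⊤) := by
  intro x y w ρ hy
  set m := max x y + 1
  have hprefix : ∀ i, i < w.length →
      (FO.sat w (Function.update ρ m i) (FO.conj (FO.le m y) (φ x m)) ↔
        i ≤ ρ y ∧ ρ x ≤ i ∧ w.extract (ρ x) (i + 1) ∈ L) := by
    intro i hi
    simp only [FO.sat, FO.sat_le]
    rw [h x m w _ (by simpa using hi)]
    simp [show x ≠ m by omega, show y ≠ m by omega]
  simp only [prefixFormula, FO.sat, FO.sat_ite_falsum]
  constructor
  · rintro (⟨he, hxy⟩ | ⟨i, hi, hs⟩)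
    · rw [FO.sat_le] at hxy
      exact ⟨hxy, (Language.extract_mem_mul_top_iff hxy).2 (Or.inl he)⟩
    · obtain ⟨hiy, hxi, hL⟩ := (hprefix i hi).1 hs
      exact ⟨by omega, (Language.extract_mem_mul_top_iff (by omega)).2 (Or.inr ⟨i, hxi, hiy, hL⟩)⟩
  · rintro ⟨hxy, hmem⟩
    rcases (Language.extract_mem_mul_top_iff hxy).1 hmem with he | ⟨i, hxi, hiy, hL⟩
    · exact Or.inl ⟨he, FO.sat_le.2 hxy⟩
    · exact Or.inr ⟨i, by omega, (hprefix i (by omega)).2 ⟨hiy, hxi, hL⟩⟩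

theorem DefinesFactors.fODefines (h : DefinesFactors φ L) [Decidable ([] ∈ L)] :
    FODefines (sentenceOfFactors ([] ∈ L) φ) L := by
  intro w ρ
  set ρ' : ℕ → ℕ → ℕ → ℕ := fun i k => Function.update (Function.update ρ 0 i) 1 k
  have hfactor : ∀ i k, k < w.length →
      (FO.sat w (ρ' i k) (φ 0 1) ↔ i ≤ k ∧ w.extract i (k + 1) ∈ L) := by
    intro i k hk
    rw [h 0 1 w _ (by simpa [ρ'] using hk)]
    simp [ρ']
  have hbounds : ∀ i k, (FO.sat w (ρ' i k) (FO.all 2 (FO.conj (FO.le 0 2) (FO.le 2 1))) ↔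
      ∀ j < w.length, i ≤ j ∧ j ≤ k) := by
    intro i k
    simp [FO.sat, ρ']
  rw [sentenceOfFactors, FO.sat, FO.sat_ite_falsum, FO.sat]
  obtain rfl | hne := eq_or_ne w []
  · simp [FO.sat]
  have hlen := List.length_pos_iff.2 hne
  constructor
  · intro hw
    refine Or.inr ⟨0, hlen, w.length - 1, by omega, (hbounds _ _).2 fun j hj => by omega,
      (hfactor _ _ (by omega)).2 ⟨by omega, by simpa [Nat.sub_add_cancel hlen] using hw⟩⟩
  · rintro (⟨-, hnil⟩ | ⟨i, -, k, hk, hb, hs⟩)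
    · exact (FO.sat_falsum (hnil 0 hlen)).elim
    have hi := ((hbounds i k).1 hb 0 hlen).1
    have hk' := ((hbounds i k).1 hb (w.length - 1) (by omega)).2
    obtain ⟨-, hL⟩ := (hfactor i k hk).1 hs
    simpa [show i = 0 by omega, show k + 1 = w.length by omega] using hL

end FactorFormulas

section Definability

variable {α : Type} {L L₁ L₂ : Language α} {s s' s₁ s₂ : ℕ}

def FactorDefinable (L : Language α) (s : ℕ) : Prop :=
  ∃ φ : ℕ → ℕ → FO α, DefinesFactors φ L ∧ ∀ x y, (φ x y).size ≤ s

theorem FactorDefinable.mono (h : FactorDefinable L s) (hs : s ≤ s') : FactorDefinable L s' :=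
  let ⟨φ, hφ, hsize⟩ := h
  ⟨φ, hφ, fun x y => (hsize x y).trans hs⟩

theorem FactorDefinable.one : FactorDefinable (1 : Language α) 1 :=
  ⟨_, DefinesFactors.one, fun _ _ => le_rfl⟩

theorem FactorDefinable.lastLetter [Fintype α] (p : α → Prop) :
    FactorDefinable {u | ∃ u' a, u = u' ++ [a] ∧ p a} (2 * Fintype.card α + 4) := by
  classical
  refine ⟨_, DefinesFactors.lastLetter p, fun x y => ?_⟩
  have hcard : (Finset.univ.filter p).toList.length ≤ Fintype.card α := by
    rw [Finset.length_toList]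
    exact Finset.card_le_univ _
  simp only [FO.size, FO.size_le, FO.size_letterIn]
  omega

theorem FactorDefinable.sup (h₁ : FactorDefinable L₁ s₁) (h₂ : FactorDefinable L₂ s₂) :
    FactorDefinable (L₁ ⊔ L₂) (s₁ + s₂ + 1) := by
  obtain ⟨φ₁, hφ₁, hs₁⟩ := h₁
  obtain ⟨φ₂, hφ₂, hs₂⟩ := h₂
  exact ⟨_, hφ₁.sup hφ₂, fun x y => by simp only [FO.size]; linarith [hs₁ x y, hs₂ x y]⟩

theorem FactorDefinable.inf (h₁ : FactorDefinable L₁ s₁) (h₂ : FactorDefinable L₂ s₂) :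
    FactorDefinable (L₁ ⊓ L₂) (s₁ + s₂ + 1) := by
  obtain ⟨φ₁, hφ₁, hs₁⟩ := h₁
  obtain ⟨φ₂, hφ₂, hs₂⟩ := h₂
  exact ⟨_, hφ₁.inf hφ₂, fun x y => by simp only [FO.size]; linarith [hs₁ x y, hs₂ x y]⟩

theorem FactorDefinable.sdiff (h₁ : FactorDefinable L₁ s₁) (h₂ : FactorDefinable L₂ s₂) :
    FactorDefinable (L₁ \ L₂) (s₁ + s₂ + 2) := by
  obtain ⟨φ₁, hφ₁, hs₁⟩ := h₁
  obtain ⟨φ₂, hφ₂, hs₂⟩ := h₂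
  exact ⟨_, hφ₁.sdiff hφ₂, fun x y => by simp only [FO.size]; linarith [hs₁ x y, hs₂ x y]⟩

theorem FactorDefinable.mul (h₁ : FactorDefinable L₁ s₁) (h₂ : FactorDefinable L₂ s₂) :
    FactorDefinable (L₁ * L₂) (2 * (s₁ + s₂) + 13) := by
  classical
  obtain ⟨φ₁, hφ₁, hs₁⟩ := h₁
  obtain ⟨φ₂, hφ₂, hs₂⟩ := h₂
  refine ⟨_, hφ₁.mul hφ₂, fun x y => ?_⟩
  have := (FO.size_ite_falsum_le ([] ∈ L₁) (φ₂ x y)).trans (hs₂ x y)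
  have := (FO.size_ite_falsum_le ([] ∈ L₂) (φ₁ x y)).trans (hs₁ x y)
  have := hs₁ x (max x y + 1)
  have := hs₂ (max x y + 2) y
  simp only [concatFormula, FO.size, FO.size_succ]
  omega

theorem FactorDefinable.mul_top (h : FactorDefinable L s) : FactorDefinable (L * ⊤) (s + 7) := by
  classical
  obtain ⟨φ, hφ, hs⟩ := h
  refine ⟨_, hφ.mul_top, fun x y => ?_⟩
  have := FO.size_ite_falsum_le ([] ∈ L) (FO.le x y : FO α)
  have := hs x (max x y + 1)
  simp only [prefixFormula, FO.size, FO.size_le] at *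
  omega

theorem FactorDefinable.exists_fODefines (h : FactorDefinable L s) :
    ∃ φ : FO α, FODefines φ L ∧ φ.size ≤ s + 12 := by
  classical
  obtain ⟨φ, hφ, hs⟩ := h
  refine ⟨_, hφ.fODefines, ?_⟩
  have := FO.size_ite_falsum_le ([] ∈ L) (FO.all 0 FO.falsum : FO α)
  have := hs 0 1
  simp only [sentenceOfFactors, FO.size, FO.size_le, FO.size_falsum] at *
  omega

end Definability

theorem two_mul_add_pow_add_le_pow_add {K a b : ℕ} (hK : 8 ≤ K) (ha : 0 < a) (hb : 0 < b) :
    2 * (K ^ a + K ^ b) + 17 ≤ K ^ (a + b) := by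
  have hKa : K ≤ K ^ a := Nat.le_self_pow ha.ne' K
  have hKb : K ≤ K ^ b := Nat.le_self_pow hb.ne' K
  rw [pow_add]
  nlinarith

section Translation

variable {P : Type}

theorem PropForm.size_pos (γ : PropForm P) : 0 < γ.size := by
  cases γ <;> simp [PropForm.size]

theorem ADT.size_pos : ∀ t : ADT P, 0 < t.size
  | .eps => Nat.one_pos
  | .leaf γ => γ.size_pos
  | .orA t₁ _ | .sand t₁ _ | .andA t₁ _ | .cm t₁ _ =>
    (ADT.size_pos t₁).trans_le (Nat.le_add_right _ _)

theorem factorDefinable_sem [Fintype P] (t : ADT P) :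
    FactorDefinable (sem t) ((2 * Fintype.card (Val P) + 8) ^ t.size) := by
  set K := 2 * Fintype.card (Val P) + 8
  have hK : 8 ≤ K := by omega
  have hK_le : ∀ t : ADT P, K ≤ K ^ t.size := fun t => Nat.le_self_pow t.size_pos.ne' K
  have hgrow : ∀ t₁ t₂ : ADT P, 2 * (K ^ t₁.size + K ^ t₂.size) + 17 ≤ K ^ (t₁.size + t₂.size) :=
    fun t₁ t₂ => two_mul_add_pow_add_le_pow_add hK t₁.size_pos t₂.size_pos
  induction t with
  | eps => exact FactorDefinable.one.mono (le_trans (by omega) (hK_le .eps))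
  | leaf γ => exact (FactorDefinable.lastLetter _).mono (le_trans (by omega) (hK_le (.leaf γ)))
  | orA t₁ t₂ ih₁ ih₂ =>
    exact (ih₁.sup ih₂).mono
      (le_trans (by omega) (hgrow t₁ t₂))
  | sand t₁ t₂ ih₁ ih₂ =>
    exact (ih₁.mul ih₂).mono
      (le_trans (by omega) (hgrow t₁ t₂))
  | andA t₁ t₂ ih₁ ih₂ =>
    exact ((ih₁.mul_top.inf ih₂).sup (ih₂.mul_top.inf ih₁)).mono
      (le_trans (by omega) (hgrow t₁ t₂))
  | cm t₁ t₂ ih₁ ih₂ =>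
    exact (ih₁.sdiff ih₂).mono
      (le_trans (by omega) (hgrow t₁ t₂))

end Translation

theorem pow_add_le_two_pow {K n : ℕ} (hK : 4 ≤ K) (hn : 0 < n) :
    K ^ n + 12 ≤ 2 ^ (2 * K * n) := by
  have hpow : K ^ n ≤ 2 ^ (K * n) := by
    rw [pow_mul]
    exact Nat.pow_le_pow_left (Nat.lt_two_pow_self).le n
  have h12 : 12 ≤ 2 ^ (K * n) :=
    (by norm_num : 12 ≤ 2 ^ 4).trans (Nat.pow_le_pow_right (by norm_num) (by nlinarith))
  calc K ^ n + 12 ≤ 2 ^ (K * n + 1) := by rw [pow_succ]; omega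
    _ ≤ 2 ^ (2 * K * n) := Nat.pow_le_pow_right (by norm_num) (by nlinarith)

/-- Every adt `t` translates into an equivalent FO sentence `φ_t`, of size at most
exponential in the size of `t` (with a constant `c` independent of `t`). -/
theorem adt_to_FO {P : Type} [Fintype P] :
    ∃ c : ℕ, ∀ t : ADT P, ∃ φ : FO (Val P),
      FODefines φ (sem t) ∧ FO.size φ ≤ 2 ^ (c * ADT.size t) := by
  refine ⟨2 * (2 * Fintype.card (Val P) + 8), fun t => ?_⟩
  obtain ⟨φ, hφ, hsize⟩ := (factorDefinable_sem t).exists_fODefines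
  exact ⟨φ, hφ, hsize.trans (pow_add_le_two_pow (by omega) t.size_pos)⟩

end ADTpaper
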